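/- arXiv:1805.04674 — 10 statements merged into one kernel-verified Lean document; each statement's English description precedes it below -/
import Mathlib

section
/- Let α, β, γ be isotropic subspaces of (V, ω). Suppose x₁, x₂ ∈ α ∩ (β + γ) admit decompositions xⱼ = −yⱼ + zⱼ with yⱼ ∈ β and zⱼ ∈ γ (j = 1, 2). Then ω(x₁, y₂) = ω(z₁, y₂) = ω(x₁, z₂), the value ω(x₁, z₂) is independent of the chosen decompositions of x₁ and x₂, and ω(x₁, z₂) = conj(ω(x₂, z₁)); in particular the form Q(α,β;γ)(x₁, x₂) := ω(x₁, z₂) is a well-defined Hermitian form on α ∩ (β + γ). -/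
open Module Submodule

/-- The annihilator of a subspace `lam` with respect to a sesquilinear form `ω`
(linear in the first variable, conjugate-linear in the second). -/
def symplAnn {V : Type*} [AddCommGroup V] [Module ℂ V]
    (ω : V →ₗ[ℂ] V →ₗ⋆[ℂ] ℂ) (lam : Submodule ℂ V) : Submodule ℂ V where
  carrier := {x | ∀ y ∈ lam, ω x y = 0}
  add_mem' := by
    intro a b ha hb y hy
    simp [ha y hy, hb y hy]
  zero_mem' := by
    intro y hy
    simp
  smul_mem' := by
    intro c x hx y hy
    simp [hx y hy]

theorem stmt0 {V : Type*} [AddCommGroup V] [Module ℂ V]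
    (ω : V →ₗ[ℂ] V →ₗ⋆[ℂ] ℂ)
    (hSkew : ∀ x y : V, ω y x = -(starRingEnd ℂ) (ω x y))
    (hNd : ∀ x : V, (∀ y : V, ω x y = 0) → x = 0)
    (α β γ : Submodule ℂ V)
    (hα : α ≤ symplAnn ω α) (hβ : β ≤ symplAnn ω β) (hγ : γ ≤ symplAnn ω γ)
    (x₁ x₂ y₁ y₂ z₁ z₂ : V)
    (hx₁ : x₁ ∈ α) (hx₂ : x₂ ∈ α)
    (hy₁ : y₁ ∈ β) (hy₂ : y₂ ∈ β) (hz₁ : z₁ ∈ γ) (hz₂ : z₂ ∈ γ)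
    (h₁ : x₁ = -y₁ + z₁) (h₂ : x₂ = -y₂ + z₂) :
    ω x₁ y₂ = ω z₁ y₂ ∧ ω x₁ y₂ = ω x₁ z₂ ∧
      (∀ y₂' ∈ β, ∀ z₂' ∈ γ, x₂ = -y₂' + z₂' → ω x₁ z₂' = ω x₁ z₂) ∧
      ω x₁ z₂ = (starRingEnd ℂ) (ω x₂ z₁) := by

  have hββ : ∀ a ∈ β, ∀ b ∈ β, ω a b = 0 := fun a ha b hb => hβ ha b hb
  have hγγ : ∀ a ∈ γ, ∀ b ∈ γ, ω a b = 0 := fun a ha b hb => hγ ha b hb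
  have hαα : ∀ a ∈ α, ∀ b ∈ α, ω a b = 0 := fun a ha b hb => hα ha b hb
  -- key lemma A (generic): for any y' ∈ β, ω x₁ y' = ω z₁ y'
  have A : ∀ y' ∈ β, ω x₁ y' = ω z₁ y' := by
    intro y' hy'
    rw [h₁]
    simp [LinearMap.add_apply, LinearMap.neg_apply, hββ y₁ hy₁ y' hy']
  -- key lemma B (generic): for any decomposition of x₂, ω x₁ z' = ω x₁ y'
  have B : ∀ y' ∈ β, ∀ z' : V, x₂ = -y' + z' → ω x₁ z' = ω x₁ y' := by
    intro y' hy' z' h'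
    have h0 : ω x₁ x₂ = 0 := hαα x₁ hx₁ x₂ hx₂
    rw [h'] at h0
    simp only [map_add, map_neg] at h0
    linear_combination h0
  have hA : ω x₁ y₂ = ω z₁ y₂ := A y₂ hy₂
  have hB : ω x₁ y₂ = ω x₁ z₂ := (B y₂ hy₂ z₂ h₂).symm
  refine ⟨hA, hB, ?_, ?_⟩
  · intro y₂' hy₂' z₂' hz₂' h₂'
    have hw : y₂' - y₂ = z₂' - z₂ := by
      have h := h₂.symm.trans h₂'
      linear_combination (norm := abel) h
    have hwγ : y₂' - y₂ ∈ γ := hw ▸ sub_mem hz₂' hz₂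
    have hz : ω z₁ y₂' = ω z₁ y₂ := by
      have h0 : ω z₁ (y₂' - y₂) = 0 := hγγ z₁ hz₁ _ hwγ
      simp only [map_sub] at h0
      linear_combination h0
    rw [B y₂' hy₂' z₂' h₂', A y₂' hy₂', hz, ← hA, hB]
  · have h1 : ω x₂ z₁ = -ω y₂ z₁ := by
      rw [h₂]
      simp [LinearMap.add_apply, LinearMap.neg_apply, hγγ z₂ hz₂ z₁ hz₁]
    rw [← hB, hA, h1, map_neg, ← hSkew]
end

section
/- Let V be finite-dimensional and let α, β, γ be isotropic subspaces of (V, ω). Then m⁻(Q(α,β;γ)) = m⁻(Q(β,γ;α)) = m⁻(Q(γ,α;β)) and m⁺(Q(α,β;γ)) = m⁺(Q(β,γ;α)) = m⁺(Q(γ,α;β)). -/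
open Module Submodule

/-- The negative Morse index `m⁻(Q(α,β;γ))` of the Hermitian form `Q(α,β;γ)` on
`α ∩ (β + γ)` given by `Q(x₁,x₂) = ω x₁ z₂` whenever `x₂ = -y₂ + z₂` with
`y₂ ∈ β`, `z₂ ∈ γ`: the maximal dimension of a subspace on which `Q` is
negative definite. -/
noncomputable def negIndexQ {V : Type*} [AddCommGroup V] [Module ℂ V]
    (ω : V →ₗ[ℂ] V →ₗ⋆[ℂ] ℂ) (α β γ : Submodule ℂ V) : ℕ :=
  sSup {n : ℕ | ∃ W : Submodule ℂ V, W ≤ α ⊓ (β ⊔ γ) ∧ Module.finrank ℂ W = n ∧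
    ∀ x ∈ W, x ≠ 0 → ∀ y ∈ β, ∀ z ∈ γ, x = -y + z → (ω x z).re < 0}

/-- The positive Morse index `m⁺(Q(α,β;γ))` of the Hermitian form `Q(α,β;γ)` on
`α ∩ (β + γ)`: the maximal dimension of a subspace on which `Q` is positive
definite. -/
noncomputable def posIndexQ {V : Type*} [AddCommGroup V] [Module ℂ V]
    (ω : V →ₗ[ℂ] V →ₗ⋆[ℂ] ℂ) (α β γ : Submodule ℂ V) : ℕ :=
  sSup {n : ℕ | ∃ W : Submodule ℂ V, W ≤ α ⊓ (β ⊔ γ) ∧ Module.finrank ℂ W = n ∧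
    ∀ x ∈ W, x ≠ 0 → ∀ y ∈ β, ∀ z ∈ γ, x = -y + z → 0 < (ω x z).re}

lemma keyTransfer {V : Type*} [AddCommGroup V] [Module ℂ V] [FiniteDimensional ℂ V]
    (ω : V →ₗ[ℂ] V →ₗ⋆[ℂ] ℂ)
    (hSkew : ∀ x y : V, ω y x = -(starRingEnd ℂ) (ω x y))
    (α β γ : Submodule ℂ V)
    (hα : α ≤ symplAnn ω α) (hγ : γ ≤ symplAnn ω γ)
    (P : ℝ → Prop) (hP0 : ¬ P 0) {n : ℕ}
    (h : ∃ W : Submodule ℂ V, W ≤ α ⊓ (β ⊔ γ) ∧ Module.finrank ℂ W = n ∧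
      ∀ x ∈ W, x ≠ 0 → ∀ y ∈ β, ∀ z ∈ γ, x = -y + z → P (ω x z).re) :
    ∃ W : Submodule ℂ V, W ≤ β ⊓ (γ ⊔ α) ∧ Module.finrank ℂ W = n ∧
      ∀ x ∈ W, x ≠ 0 → ∀ y ∈ γ, ∀ z ∈ α, x = -y + z → P (ω x z).re := by
  obtain ⟨W, hWle, hWrank, hWP⟩ := h
  have hWβγ : W ≤ β ⊔ γ := hWle.trans inf_le_right
  have hWα : W ≤ α := hWle.trans inf_le_left
  -- projection structure on β ⊔ γ
  let f : (β × γ) →ₗ[ℂ] ↥(β ⊔ γ) :=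
    { toFun := fun p => ⟨(p.1 : V) + (p.2 : V),
        add_mem (Submodule.mem_sup_left p.1.2) (Submodule.mem_sup_right p.2.2)⟩
      map_add' := by intro a b; ext; simp; abel
      map_smul' := by intro c a; ext; simp }
  have hf : LinearMap.range f = ⊤ := by
    rw [LinearMap.range_eq_top]
    rintro ⟨x, hx⟩
    rcases Submodule.mem_sup.mp hx with ⟨b, hb, c, hc, rfl⟩
    exact ⟨(⟨b, hb⟩, ⟨c, hc⟩), rfl⟩
  obtain ⟨g, hg⟩ := f.exists_rightInverse_of_surjective hf
  have hg' : ∀ v : ↥(β ⊔ γ), ((g v).1 : V) + ((g v).2 : V) = (v : V) := by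
    intro v
    exact congrArg Subtype.val (LinearMap.congr_fun hg v)
  let ι : ↥W →ₗ[ℂ] ↥(β ⊔ γ) := Submodule.inclusion hWβγ
  let φ : ↥W →ₗ[ℂ] V := -(β.subtype ∘ₗ (LinearMap.fst ℂ β γ) ∘ₗ g ∘ₗ ι)
  have hφ : ∀ x : ↥W, φ x = -((g (ι x)).1 : V) := fun x => rfl
  have hsum : ∀ x : ↥W, ((g (ι x)).1 : V) + ((g (ι x)).2 : V) = (x : V) :=
    fun x => hg' (ι x)
  -- isotropy helpers
  have hαiso : ∀ a b : V, a ∈ α → b ∈ α → ω a b = 0 := fun a b ha hb => hα ha b hb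
  have hγiso : ∀ a b : V, a ∈ γ → b ∈ γ → ω a b = 0 := fun a b ha hb => hγ ha b hb
  have hinj : Function.Injective φ := by
    rw [← LinearMap.ker_eq_bot, LinearMap.ker_eq_bot']
    intro x hx
    have hb0 : ((g (ι x)).1 : V) = 0 := by
      have h1 := (hφ x).symm.trans hx
      exact neg_eq_zero.mp h1
    have hxγ : (x : V) ∈ γ := by
      have := hsum x
      rw [hb0, zero_add] at this
      rw [← this]; exact (g (ι x)).2.2
    by_contra hxne
    have hxVne : (x : V) ≠ 0 := fun h0 => hxne (Subtype.ext h0)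
    have := hWP (x : V) x.2 hxVne 0 β.zero_mem (x : V) hxγ (by simp)
    rw [hαiso _ _ (hWα x.2) (hWα x.2)] at this
    simp at this
    exact hP0 this
  refine ⟨LinearMap.range φ, ?_, ?_, ?_⟩
  · rintro v ⟨x, rfl⟩
    have hb : ((g (ι x)).1 : V) ∈ β := (g (ι x)).1.2
    have hc : ((g (ι x)).2 : V) ∈ γ := (g (ι x)).2.2
    refine ⟨by rw [hφ]; exact neg_mem hb, ?_⟩
    refine Submodule.mem_sup.mpr ⟨((g (ι x)).2 : V), hc, -(x : V), neg_mem (hWα x.2), ?_⟩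
    rw [hφ, ← hsum x]
    abel
  · rw [LinearMap.finrank_range_of_inj hinj, hWrank]
  · rintro v ⟨x, rfl⟩ hvne y' hy' z' hz' hdec
    set b : V := ((g (ι x)).1 : V) with hbdef
    set c : V := ((g (ι x)).2 : V) with hcdef
    have hb : b ∈ β := (g (ι x)).1.2
    have hc : c ∈ γ := (g (ι x)).2.2
    have hbc : b + c = (x : V) := hsum x
    have hv : φ x = -b := hφ x
    have hxVne : (x : V) ≠ 0 := by
      intro h0
      have hx0 : x = 0 := Subtype.ext (by simpa using h0)
      exact hvne (by rw [hx0, map_zero])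
    -- canonical P value: P (ω x c).re
    have hPx : P ((ω (x : V)) c).re := by
      refine hWP (x : V) x.2 hxVne (-b) (neg_mem hb) c hc ?_
      rw [← hbc]; abel
    -- ω x c = ω x (φ x)
    have hωxc : (ω (x : V)) c = (ω (x : V)) (φ x) := by
      have hcx : c = (x : V) + φ x := by rw [hv, ← hbc]; abel
      rw [hcx, map_add, hαiso _ _ (hWα x.2) (hWα x.2), zero_add]
    -- d := z' + x ∈ α ∩ γ
    have hd1 : z' + (x : V) ∈ α := add_mem hz' (hWα x.2)
    have hd2 : z' + (x : V) ∈ γ := by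
      have : z' + (x : V) = y' + c := by
        have h1 : φ x = -y' + z' := hdec
        rw [hv] at h1
        have h2 : b = (x : V) - c := by rw [← hbc]; abel
        rw [h2] at h1
        linear_combination (norm := module) -h1
      rw [this]; exact add_mem hy' hc
    -- ω (φ x) z' = conj (ω x (φ x))
    have hωvz : (ω (φ x)) z' = (starRingEnd ℂ) ((ω (x : V)) (φ x)) := by
      have hvcx : φ x = c - (x : V) := by rw [hv, ← hbc]; abel
      have hωvd : (ω (φ x)) (z' + (x : V)) = 0 := by
        rw [hvcx, map_sub, LinearMap.sub_apply,
          hγiso _ _ hc hd2, hαiso _ _ (hWα x.2) hd1, sub_zero]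
      have hsplit : (ω (φ x)) z' = (ω (φ x)) (-(x : V)) + (ω (φ x)) (z' + (x : V)) := by
        rw [← map_add]; congr 1; abel
      rw [hsplit, hωvd, add_zero]
      have := hSkew (x : V) (φ x)
      rw [show (ω (φ x)) (-(x:V)) = -((ω (φ x)) (x:V)) by rw [map_neg], this]
      ring
    rw [hωvz, Complex.conj_re, ← hωxc]
    exact hPx

lemma indexLe {V : Type*} [AddCommGroup V] [Module ℂ V] [FiniteDimensional ℂ V]
    (ω : V →ₗ[ℂ] V →ₗ⋆[ℂ] ℂ)
    (hSkew : ∀ x y : V, ω y x = -(starRingEnd ℂ) (ω x y))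
    (α β γ : Submodule ℂ V)
    (hα : α ≤ symplAnn ω α) (hγ : γ ≤ symplAnn ω γ) :
    negIndexQ ω α β γ ≤ negIndexQ ω β γ α ∧ posIndexQ ω α β γ ≤ posIndexQ ω β γ α := by
  have hbdd : ∀ (α' β' γ' : Submodule ℂ V) (P : ℝ → Prop), BddAbove
      {n : ℕ | ∃ W : Submodule ℂ V, W ≤ α' ⊓ (β' ⊔ γ') ∧ Module.finrank ℂ W = n ∧
        ∀ x ∈ W, x ≠ 0 → ∀ y ∈ β', ∀ z ∈ γ', x = -y + z → P (ω x z).re} := by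
    intro α' β' γ' P
    refine ⟨Module.finrank ℂ V, ?_⟩
    rintro n ⟨W, -, rfl, -⟩
    exact Submodule.finrank_le W
  have hne : ∀ (α' β' γ' : Submodule ℂ V) (P : ℝ → Prop),
      ({n : ℕ | ∃ W : Submodule ℂ V, W ≤ α' ⊓ (β' ⊔ γ') ∧ Module.finrank ℂ W = n ∧
        ∀ x ∈ W, x ≠ 0 → ∀ y ∈ β', ∀ z ∈ γ', x = -y + z → P (ω x z).re} : Set ℕ).Nonempty := by
    intro α' β' γ' P
    refine ⟨0, ⊥, bot_le, finrank_bot ℂ V, ?_⟩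
    intro x hx hxne
    exact absurd hx (by simpa using hxne)
  constructor
  · exact csSup_le_csSup (hbdd β γ α (fun r => r < 0)) (hne α β γ (fun r => r < 0))
      (fun n hn => keyTransfer ω hSkew α β γ hα hγ (fun r => r < 0) (by norm_num) hn)
  · exact csSup_le_csSup (hbdd β γ α (fun r => 0 < r)) (hne α β γ (fun r => 0 < r))
      (fun n hn => keyTransfer ω hSkew α β γ hα hγ (fun r => 0 < r) (by norm_num) hn)

theorem stmt2 {V : Type*} [AddCommGroup V] [Module ℂ V] [FiniteDimensional ℂ V]
    (ω : V →ₗ[ℂ] V →ₗ⋆[ℂ] ℂ)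
    (hSkew : ∀ x y : V, ω y x = -(starRingEnd ℂ) (ω x y))
    (hNd : ∀ x : V, (∀ y : V, ω x y = 0) → x = 0)
    (α β γ : Submodule ℂ V)
    (hα : α ≤ symplAnn ω α) (hβ : β ≤ symplAnn ω β) (hγ : γ ≤ symplAnn ω γ) :
    negIndexQ ω α β γ = negIndexQ ω β γ α ∧
    negIndexQ ω β γ α = negIndexQ ω γ α β ∧
    posIndexQ ω α β γ = posIndexQ ω β γ α ∧
    posIndexQ ω β γ α = posIndexQ ω γ α β := by
  obtain ⟨hn1, hp1⟩ := indexLe ω hSkew α β γ hα hγ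
  obtain ⟨hn2, hp2⟩ := indexLe ω hSkew β γ α hβ hα
  obtain ⟨hn3, hp3⟩ := indexLe ω hSkew γ α β hγ hβ
  refine ⟨le_antisymm hn1 (hn2.trans hn3), le_antisymm hn2 (hn3.trans hn1),
    le_antisymm hp1 (hp2.trans hp3), le_antisymm hp2 (hp3.trans hp1)⟩
end

section
/- Let α, β, γ be isotropic subspaces of (V, ω). Then α ∩ (β ∩ (α + γ))^ω = α ∩ (γ ∩ (α + β))^ω. -/
open Module Submodule

lemma symplAnn_key {V : Type*} [AddCommGroup V] [Module ℂ V]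
    (ω : V →ₗ[ℂ] V →ₗ⋆[ℂ] ℂ)
    (hSkew : ∀ x y : V, ω y x = -(starRingEnd ℂ) (ω x y))
    (α β γ : Submodule ℂ V) (hα : α ≤ symplAnn ω α) :
    α ⊓ symplAnn ω (β ⊓ (α ⊔ γ)) ≤ α ⊓ symplAnn ω (γ ⊓ (α ⊔ β)) := by
  rintro x ⟨hxα, hx⟩
  refine ⟨hxα, ?_⟩
  rintro y ⟨hyγ, hy⟩
  obtain ⟨a, ha, b, hb, rfl⟩ := Submodule.mem_sup.mp hy
  have h1 : ω x a = 0 := by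
    rw [hSkew a x, hα ha x hxα]
    simp
  have hbmem : b ∈ β ⊓ (α ⊔ γ) := by
    refine ⟨hb, ?_⟩
    have : b = (a + b) - a := by abel
    rw [this]
    exact Submodule.sub_mem _ (Submodule.mem_sup_right hyγ)
      (Submodule.mem_sup_left ha)
  have h2 : ω x b = 0 := hx b hbmem
  simp [map_add, h1, h2]

theorem stmt3 {V : Type*} [AddCommGroup V] [Module ℂ V]
    (ω : V →ₗ[ℂ] V →ₗ⋆[ℂ] ℂ)
    (hSkew : ∀ x y : V, ω y x = -(starRingEnd ℂ) (ω x y))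
    (hNd : ∀ x : V, (∀ y : V, ω x y = 0) → x = 0)
    (α β γ : Submodule ℂ V)
    (hα : α ≤ symplAnn ω α) (hβ : β ≤ symplAnn ω β) (hγ : γ ≤ symplAnn ω γ) :
    α ⊓ symplAnn ω (β ⊓ (α ⊔ γ)) = α ⊓ symplAnn ω (γ ⊓ (α ⊔ β)) := by
  exact le_antisymm (symplAnn_key ω hSkew α β γ hα) (symplAnn_key ω hSkew α γ β hα)
end

section
/- Let α, β, γ be isotropic subspaces of (V, ω). Then the following four subspaces of V coincide: α ∩ (β + γ) ∩ (β ∩ (α + γ))^ω, α ∩ (β + γ ∩ (β ∩ (α + γ))^ω), α ∩ (β + γ ∩ (α ∩ (β + γ))^ω), and α ∩ (β ∩ (γ ∩ (α + β))^ω + γ). (The first subspace is the kernel of the Hermitian form Q(α,β;γ).) -/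
open Module Submodule

lemma mem_symplAnn {V : Type*} [AddCommGroup V] [Module ℂ V]
    (ω : V →ₗ[ℂ] V →ₗ⋆[ℂ] ℂ) (lam : Submodule ℂ V) (x : V) :
    x ∈ symplAnn ω lam ↔ ∀ y ∈ lam, ω x y = 0 := Iff.rfl

/-- K₁ = K₂ : `α ⊓ (β ⊔ γ) ⊓ ann(β ⊓ (α ⊔ γ)) = α ⊓ (β ⊔ (γ ⊓ ann(β ⊓ (α ⊔ γ))))`. -/
lemma lem12 {V : Type*} [AddCommGroup V] [Module ℂ V]
    (ω : V →ₗ[ℂ] V →ₗ⋆[ℂ] ℂ) (α β γ : Submodule ℂ V)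
    (hβ : β ≤ symplAnn ω β) :
    α ⊓ (β ⊔ γ) ⊓ symplAnn ω (β ⊓ (α ⊔ γ)) =
      α ⊓ (β ⊔ (γ ⊓ symplAnn ω (β ⊓ (α ⊔ γ)))) := by
  apply le_antisymm
  · rintro x ⟨⟨hxα, hxβγ⟩, hxann⟩
    obtain ⟨b, hb, c, hc, hbc⟩ := mem_sup.mp hxβγ
    refine ⟨hxα, mem_sup.mpr ⟨b, hb, c, ⟨hc, ?_⟩, hbc⟩⟩
    rintro y ⟨hyβ, hyαγ⟩
    have hx0 : ω x y = 0 := hxann y ⟨hyβ, hyαγ⟩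
    have hb0 : ω b y = 0 := hβ hb y hyβ
    have hsum : ω x y = ω b y + ω c y := by rw [← hbc]; simp
    rw [hx0, hb0] at hsum
    simpa using hsum.symm
  · rintro x ⟨hxα, hxβγ⟩
    obtain ⟨b, hb, c, ⟨hcγ, hcann⟩, hbc⟩ := mem_sup.mp hxβγ
    refine ⟨⟨hxα, mem_sup.mpr ⟨b, hb, c, hcγ, hbc⟩⟩, ?_⟩
    rintro y ⟨hyβ, hyαγ⟩
    have hb0 : ω b y = 0 := hβ hb y hyβ
    have hc0 : ω c y = 0 := hcann y ⟨hyβ, hyαγ⟩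
    have hsum : ω x y = ω b y + ω c y := by rw [← hbc]; simp
    rw [hb0, hc0] at hsum
    simpa using hsum

/-- K₂ = K₃. -/
lemma lem23 {V : Type*} [AddCommGroup V] [Module ℂ V]
    (ω : V →ₗ[ℂ] V →ₗ⋆[ℂ] ℂ) (α β γ : Submodule ℂ V)
    (hγ : γ ≤ symplAnn ω γ) :
    α ⊓ (β ⊔ (γ ⊓ symplAnn ω (β ⊓ (α ⊔ γ)))) =
      α ⊓ (β ⊔ (γ ⊓ symplAnn ω (α ⊓ (β ⊔ γ)))) := by
  apply le_antisymm
  · rintro x ⟨hxα, hxβγ⟩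
    obtain ⟨b, hb, c, ⟨hcγ, hcann⟩, hbc⟩ := mem_sup.mp hxβγ
    refine ⟨hxα, mem_sup.mpr ⟨b, hb, c, ⟨hcγ, ?_⟩, hbc⟩⟩
    rintro y ⟨hyα, hyβγ⟩
    obtain ⟨b₂, hb₂, c₂, hc₂, h₂⟩ := mem_sup.mp hyβγ
    have hb₂' : b₂ ∈ α ⊔ γ := by
      have : b₂ = y - c₂ := by rw [← h₂]; abel
      rw [this]
      exact sub_mem (mem_sup_left hyα) (mem_sup_right hc₂)
    have h1 : ω c b₂ = 0 := hcann b₂ ⟨hb₂, hb₂'⟩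
    have h2 : ω c c₂ = 0 := hγ hcγ c₂ hc₂
    have hsum : ω c y = ω c b₂ + ω c c₂ := by rw [← h₂]; simp
    rw [h1, h2] at hsum
    simpa using hsum
  · rintro x ⟨hxα, hxβγ⟩
    obtain ⟨b, hb, c, ⟨hcγ, hcann⟩, hbc⟩ := mem_sup.mp hxβγ
    refine ⟨hxα, mem_sup.mpr ⟨b, hb, c, ⟨hcγ, ?_⟩, hbc⟩⟩
    rintro y ⟨hyβ, hyαγ⟩
    obtain ⟨a₂, ha₂, c₂, hc₂, h₂⟩ := mem_sup.mp hyαγ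
    have ha₂' : a₂ ∈ β ⊔ γ := by
      have : a₂ = y - c₂ := by rw [← h₂]; abel
      rw [this]
      exact sub_mem (mem_sup_left hyβ) (mem_sup_right hc₂)
    have h1 : ω c a₂ = 0 := hcann a₂ ⟨ha₂, ha₂'⟩
    have h2 : ω c c₂ = 0 := hγ hcγ c₂ hc₂
    have hsum : ω c y = ω c a₂ + ω c c₂ := by rw [← h₂]; simp
    rw [h1, h2] at hsum
    simpa using hsum

/-- One direction of the β ↔ γ symmetry of K₁. -/
lemma annsub {V : Type*} [AddCommGroup V] [Module ℂ V]
    (ω : V →ₗ[ℂ] V →ₗ⋆[ℂ] ℂ) (α β γ : Submodule ℂ V)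
    (hα : α ≤ symplAnn ω α) :
    α ⊓ (β ⊔ γ) ⊓ symplAnn ω (β ⊓ (α ⊔ γ)) ≤ symplAnn ω (γ ⊓ (α ⊔ β)) := by
  rintro x ⟨⟨hxα, _⟩, hxann⟩
  rintro y ⟨hyγ, hyαβ⟩
  obtain ⟨a₂, ha₂, b₂, hb₂, h₂⟩ := mem_sup.mp hyαβ
  have hb₂' : b₂ ∈ α ⊔ γ := by
    have : b₂ = y - a₂ := by rw [← h₂]; abel
    rw [this]
    exact sub_mem (mem_sup_right hyγ) (mem_sup_left ha₂)
  have h1 : ω x a₂ = 0 := hα hxα a₂ ha₂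
  have h2 : ω x b₂ = 0 := hxann b₂ ⟨hb₂, hb₂'⟩
  have hsum : ω x y = ω x a₂ + ω x b₂ := by rw [← h₂]; simp
  rw [h1, h2] at hsum
  simpa using hsum

/-- β ↔ γ symmetry of K₁. -/
lemma lemSym {V : Type*} [AddCommGroup V] [Module ℂ V]
    (ω : V →ₗ[ℂ] V →ₗ⋆[ℂ] ℂ) (α β γ : Submodule ℂ V)
    (hα : α ≤ symplAnn ω α) :
    α ⊓ (β ⊔ γ) ⊓ symplAnn ω (β ⊓ (α ⊔ γ)) =
      α ⊓ (β ⊔ γ) ⊓ symplAnn ω (γ ⊓ (α ⊔ β)) := by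
  apply le_antisymm
  · exact le_inf inf_le_left (annsub ω α β γ hα)
  · have h := annsub ω α γ β hα
    rw [sup_comm γ β] at h
    exact le_inf inf_le_left h

theorem stmt4 {V : Type*} [AddCommGroup V] [Module ℂ V]
    (ω : V →ₗ[ℂ] V →ₗ⋆[ℂ] ℂ)
    (hSkew : ∀ x y : V, ω y x = -(starRingEnd ℂ) (ω x y))
    (hNd : ∀ x : V, (∀ y : V, ω x y = 0) → x = 0)
    (α β γ : Submodule ℂ V)
    (hα : α ≤ symplAnn ω α) (hβ : β ≤ symplAnn ω β) (hγ : γ ≤ symplAnn ω γ) :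
    α ⊓ (β ⊔ γ) ⊓ symplAnn ω (β ⊓ (α ⊔ γ)) =
        α ⊓ (β ⊔ (γ ⊓ symplAnn ω (β ⊓ (α ⊔ γ)))) ∧
    α ⊓ (β ⊔ (γ ⊓ symplAnn ω (β ⊓ (α ⊔ γ)))) =
        α ⊓ (β ⊔ (γ ⊓ symplAnn ω (α ⊓ (β ⊔ γ)))) ∧
    α ⊓ (β ⊔ (γ ⊓ symplAnn ω (α ⊓ (β ⊔ γ)))) =
        α ⊓ ((β ⊓ symplAnn ω (γ ⊓ (α ⊔ β))) ⊔ γ) := by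
  have h12 := lem12 ω α β γ hβ
  have h23 := lem23 ω α β γ hγ
  refine ⟨h12, h23, ?_⟩
  -- K₃ = K₂ = K₁ = (symmetric K₁) = K₄
  have h12' := lem12 ω α γ β hγ
  rw [sup_comm γ β] at h12'
  calc α ⊓ (β ⊔ (γ ⊓ symplAnn ω (α ⊓ (β ⊔ γ))))
      = α ⊓ (β ⊔ γ) ⊓ symplAnn ω (β ⊓ (α ⊔ γ)) := (h12.trans h23).symm
    _ = α ⊓ (β ⊔ γ) ⊓ symplAnn ω (γ ⊓ (α ⊔ β)) := lemSym ω α β γ hα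
    _ = α ⊓ (γ ⊔ (β ⊓ symplAnn ω (γ ⊓ (α ⊔ β)))) := h12'
    _ = α ⊓ ((β ⊓ symplAnn ω (γ ⊓ (α ⊔ β))) ⊔ γ) := by rw [sup_comm]
end

section
/- Let V be an abelian group with subgroups α, β, γ. Then the following three conditions are equivalent: (i) α ∩ β + α ∩ γ = (β + γ) ∩ α; (ii) α ∩ β + β ∩ γ = (α + γ) ∩ β; (iii) α ∩ γ + β ∩ γ = (α + β) ∩ γ. -/
lemma key7 {V : Type*} [AddCommGroup V] (a b c : AddSubgroup V)
    (h : (a ⊓ b) ⊔ (a ⊓ c) = (b ⊔ c) ⊓ a) :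
    (a ⊓ b) ⊔ (b ⊓ c) = (a ⊔ c) ⊓ b := by
  apply le_antisymm
  · exact sup_le (inf_le_inf_right b le_sup_left)
      (le_inf (le_trans inf_le_right le_sup_right) inf_le_left)
  · intro x hx
    rw [AddSubgroup.mem_inf, AddSubgroup.mem_sup] at hx
    obtain ⟨⟨u, hu, v, hv, rfl⟩, hxb⟩ := hx
    have hu' : u ∈ (b ⊔ c) ⊓ a := by
      refine ⟨?_, hu⟩
      have : u = (u + v) + (-v) := by abel
      rw [this]
      exact add_mem (AddSubgroup.mem_sup_left hxb) (AddSubgroup.mem_sup_right (neg_mem hv))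
    rw [← h, AddSubgroup.mem_sup] at hu'
    obtain ⟨p, hp, q, hq, rfl⟩ := hu'
    have hp' := AddSubgroup.mem_inf.mp hp
    have hq' := AddSubgroup.mem_inf.mp hq
    rw [AddSubgroup.mem_sup]
    refine ⟨p, hp, q + v, AddSubgroup.mem_inf.mpr ⟨?_, add_mem hq'.2 hv⟩, by abel⟩
    have : q + v = (p + q + v) + (-p) := by abel
    rw [this]
    exact add_mem hxb (neg_mem hp'.2)

theorem stmt7 {V : Type*} [AddCommGroup V] (α β γ : AddSubgroup V) :
    ((α ⊓ β) ⊔ (α ⊓ γ) = (β ⊔ γ) ⊓ α ↔ (α ⊓ β) ⊔ (β ⊓ γ) = (α ⊔ γ) ⊓ β) ∧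
    ((α ⊓ β) ⊔ (β ⊓ γ) = (α ⊔ γ) ⊓ β ↔ (α ⊓ γ) ⊔ (β ⊓ γ) = (α ⊔ β) ⊓ γ) := by
  refine ⟨⟨key7 α β γ, fun h => ?_⟩, ⟨fun h => ?_, fun h => ?_⟩⟩
  · have := key7 β α γ (by simpa [inf_comm, sup_comm] using h)
    simpa [inf_comm, sup_comm] using this
  · have := key7 β γ α (by simpa [inf_comm, sup_comm] using h)
    simpa [inf_comm, sup_comm] using this
  · have := key7 γ β α (by simpa [inf_comm, sup_comm] using h)
    simpa [inf_comm, sup_comm] using this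
end

section
/- Let V be a complex vector space and α, β, γ finite-dimensional linear subspaces of V. Then dim(α ∩ β) + dim(α ∩ γ) + dim(β ∩ γ) ≤ dim α + dim β + dim γ + dim(α ∩ β ∩ γ) − dim(α + β + γ), and equality holds if and only if α ∩ β + α ∩ γ = α ∩ (β + γ). -/
open Module Submodule

theorem stmt8 {V : Type*} [AddCommGroup V] [Module ℂ V]
    (α β γ : Submodule ℂ V)
    [FiniteDimensional ℂ α] [FiniteDimensional ℂ β] [FiniteDimensional ℂ γ] :
    finrank ℂ (α ⊓ β : Submodule ℂ V) + finrank ℂ (α ⊓ γ : Submodule ℂ V) +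
        finrank ℂ (β ⊓ γ : Submodule ℂ V) + finrank ℂ (α ⊔ β ⊔ γ : Submodule ℂ V) ≤
      finrank ℂ α + finrank ℂ β + finrank ℂ γ +
        finrank ℂ (α ⊓ β ⊓ γ : Submodule ℂ V) ∧
    (finrank ℂ (α ⊓ β : Submodule ℂ V) + finrank ℂ (α ⊓ γ : Submodule ℂ V) +
        finrank ℂ (β ⊓ γ : Submodule ℂ V) + finrank ℂ (α ⊔ β ⊔ γ : Submodule ℂ V) =
      finrank ℂ α + finrank ℂ β + finrank ℂ γ +
        finrank ℂ (α ⊓ β ⊓ γ : Submodule ℂ V) ↔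
      (α ⊓ β) ⊔ (α ⊓ γ) = α ⊓ (β ⊔ γ)) := by
  haveI : FiniteDimensional ℂ (α ⊓ β : Submodule ℂ V) :=
    Submodule.finiteDimensional_inf_left α β
  haveI : FiniteDimensional ℂ (α ⊓ γ : Submodule ℂ V) :=
    Submodule.finiteDimensional_inf_left α γ
  haveI : FiniteDimensional ℂ (β ⊓ γ : Submodule ℂ V) :=
    Submodule.finiteDimensional_inf_left β γ
  have hinf : (α ⊓ β) ⊓ (α ⊓ γ) = α ⊓ β ⊓ γ := by
    rw [← inf_inf_distrib_left, ← inf_assoc]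
  have h1 : finrank ℂ ((α ⊓ β) ⊔ (α ⊓ γ) : Submodule ℂ V) +
      finrank ℂ (α ⊓ β ⊓ γ : Submodule ℂ V) =
      finrank ℂ (α ⊓ β : Submodule ℂ V) + finrank ℂ (α ⊓ γ : Submodule ℂ V) := by
    rw [← hinf]
    exact Submodule.finrank_sup_add_finrank_inf_eq _ _
  have h2 : finrank ℂ (α ⊔ (β ⊔ γ) : Submodule ℂ V) +
      finrank ℂ (α ⊓ (β ⊔ γ) : Submodule ℂ V) =
      finrank ℂ α + finrank ℂ (β ⊔ γ : Submodule ℂ V) :=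
    Submodule.finrank_sup_add_finrank_inf_eq _ _
  have h3 : finrank ℂ (β ⊔ γ : Submodule ℂ V) + finrank ℂ (β ⊓ γ : Submodule ℂ V) =
      finrank ℂ β + finrank ℂ γ :=
    Submodule.finrank_sup_add_finrank_inf_eq _ _
  have hsup : α ⊔ β ⊔ γ = α ⊔ (β ⊔ γ) := sup_assoc α β γ
  have hle : (α ⊓ β) ⊔ (α ⊓ γ) ≤ α ⊓ (β ⊔ γ) :=
    sup_le (inf_le_inf le_rfl le_sup_left) (inf_le_inf le_rfl le_sup_right)
  have hdle : finrank ℂ ((α ⊓ β) ⊔ (α ⊓ γ) : Submodule ℂ V) ≤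
      finrank ℂ (α ⊓ (β ⊔ γ) : Submodule ℂ V) :=
    Submodule.finrank_mono hle
  rw [hsup]
  constructor
  · omega
  · constructor
    · intro h
      have : finrank ℂ (α ⊓ (β ⊔ γ) : Submodule ℂ V) ≤
          finrank ℂ ((α ⊓ β) ⊔ (α ⊓ γ) : Submodule ℂ V) := by omega
      exact (Submodule.eq_of_le_of_finrank_le hle this).symm ▸ rfl
    · intro h
      rw [h] at h1
      omega
end

section
/- Let (V, ω) be a finite-dimensional complex symplectic vector space and let α, β, γ be Lagrangian subspaces such that α ∩ γ + β ∩ γ = (α + β) ∩ γ. Then the form Q(α,β;γ) vanishes identically: for all x₁ ∈ α ∩ (β + γ) and all x₂ ∈ α, y₂ ∈ β, z₂ ∈ γ with x₂ = −y₂ + z₂, one has ω(x₁, z₂) = 0. -/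
open Module Submodule

theorem stmt10 {V : Type*} [AddCommGroup V] [Module ℂ V] [FiniteDimensional ℂ V]
    (ω : V →ₗ[ℂ] V →ₗ⋆[ℂ] ℂ)
    (hSkew : ∀ x y : V, ω y x = -(starRingEnd ℂ) (ω x y))
    (hNd : ∀ x : V, (∀ y : V, ω x y = 0) → x = 0)
    (α β γ : Submodule ℂ V)
    (hα : α = symplAnn ω α) (hβ : β = symplAnn ω β) (hγ : γ = symplAnn ω γ)
    (h : (α ⊓ γ) ⊔ (β ⊓ γ) = (α ⊔ β) ⊓ γ) :
    ∀ x₁ ∈ α ⊓ (β ⊔ γ), ∀ x₂ ∈ α, ∀ y₂ ∈ β, ∀ z₂ ∈ γ,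
      x₂ = -y₂ + z₂ → ω x₁ z₂ = 0 := by
  intro x₁ hx₁ x₂ hx₂ y₂ hy₂ z₂ hz₂ heq
  obtain ⟨hx₁α, hx₁βγ⟩ := hx₁
  -- z₂ = x₂ + y₂ ∈ (α ⊔ β) ⊓ γ
  have hz : z₂ ∈ (α ⊓ γ) ⊔ (β ⊓ γ) := by
    rw [h]
    refine ⟨?_, hz₂⟩
    have : z₂ = x₂ + y₂ := by rw [heq]; abel
    rw [this]
    exact add_mem (mem_sup_left hx₂) (mem_sup_right hy₂)
  obtain ⟨a, ha, b, hb, hab⟩ := mem_sup.mp hz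
  obtain ⟨p, hp, q, hq, hpq⟩ := mem_sup.mp hx₁βγ
  have h1 : ω x₁ a = 0 := by
    have := hα ▸ hx₁α
    exact this a ha.1
  have h2 : ω x₁ b = 0 := by
    have hpb : ω p b = 0 := by
      have := hβ ▸ hp
      exact this b hb.1
    have hqb : ω q b = 0 := by
      have := hγ ▸ hq
      exact this b hb.2
    rw [← hpq]
    simp [hpb, hqb]
  rw [← hab]
  simp [h1, h2]
end

section
/- Let α, β, γ, ε be isotropic subspaces of (V, ω) with ε ⊆ β ⊆ ε^ω. Then (α ∩ ε^ω + ε) ∩ (β + γ ∩ ε^ω + ε) = α ∩ (β + γ) ∩ ε^ω + ε. -/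
open Module Submodule

theorem stmt11 {V : Type*} [AddCommGroup V] [Module ℂ V]
    (ω : V →ₗ[ℂ] V →ₗ⋆[ℂ] ℂ)
    (hSkew : ∀ x y : V, ω y x = -(starRingEnd ℂ) (ω x y))
    (hNd : ∀ x : V, (∀ y : V, ω x y = 0) → x = 0)
    (α β γ ε : Submodule ℂ V)
    (hα : α ≤ symplAnn ω α) (hβ : β ≤ symplAnn ω β) (hγ : γ ≤ symplAnn ω γ)
    (hε : ε ≤ symplAnn ω ε)
    (hεβ : ε ≤ β) (hβε : β ≤ symplAnn ω ε) :
    ((α ⊓ symplAnn ω ε) ⊔ ε) ⊓ (β ⊔ (γ ⊓ symplAnn ω ε) ⊔ ε) =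
      (α ⊓ (β ⊔ γ) ⊓ symplAnn ω ε) ⊔ ε := by
  set E := symplAnn ω ε
  apply le_antisymm
  · intro x hx
    obtain ⟨a, ha, e, he, rfl⟩ := Submodule.mem_sup.mp hx.1
    obtain ⟨bg, hbg, e', he', hsum⟩ := Submodule.mem_sup.mp hx.2
    obtain ⟨b, hb, g, hg, rfl⟩ := Submodule.mem_sup.mp hbg
    refine Submodule.add_mem_sup ⟨⟨ha.1, ?_⟩, ha.2⟩ he
    have : a = b + g + (e' - e) := by
      have := hsum
      linear_combination (norm := abel) -this
    rw [this]
    exact add_mem (Submodule.add_mem_sup hb hg.1)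
      (Submodule.mem_sup_left (hεβ (sub_mem he' he)))
  · apply sup_le _ (le_inf le_sup_right le_sup_right)
    rintro x ⟨⟨hxα, hxβγ⟩, hxE⟩
    refine ⟨Submodule.mem_sup_left ⟨hxα, hxE⟩, ?_⟩
    obtain ⟨b, hb, g, hg, rfl⟩ := Submodule.mem_sup.mp hxβγ
    show b + g ∈ β ⊔ γ ⊓ E ⊔ ε
    have hgE : g ∈ E := by
      have : g = b + g - b := by abel
      rw [this]
      exact sub_mem hxE (hβε hb)
    exact Submodule.mem_sup_left (Submodule.add_mem_sup hb (show g ∈ γ ⊓ E from ⟨hg, hgE⟩))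
end

section
/- Let V be a complex vector space with linear subspaces α, β, γ, and set ε := α ∩ β + β ∩ γ. Then (α + ε) ∩ (γ + ε) = α ∩ γ + ε. -/
theorem stmt12 {V : Type*} [AddCommGroup V] [Module ℂ V]
    (α β γ : Submodule ℂ V) :
    (α ⊔ ((α ⊓ β) ⊔ (β ⊓ γ))) ⊓ (γ ⊔ ((α ⊓ β) ⊔ (β ⊓ γ))) =
      (α ⊓ γ) ⊔ ((α ⊓ β) ⊔ (β ⊓ γ)) := by
  have h1 : α ⊔ ((α ⊓ β) ⊔ (β ⊓ γ)) = α ⊔ (β ⊓ γ) := by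
    rw [← sup_assoc, sup_inf_self]
  have h2 : γ ⊔ ((α ⊓ β) ⊔ (β ⊓ γ)) = γ ⊔ (α ⊓ β) := by
    rw [sup_comm (α ⊓ β), ← sup_assoc, sup_of_le_left (inf_le_right : β ⊓ γ ≤ γ)]
  rw [h1, h2]
  apply le_antisymm
  · rintro x ⟨hx1, hx2⟩
    obtain ⟨a, ha, u, hu, rfl⟩ := Submodule.mem_sup.mp hx1
    obtain ⟨c, hc, v, hv, hcv⟩ := Submodule.mem_sup.mp hx2
    have hav : a - v ∈ α ⊓ γ := by
      constructor
      · exact sub_mem ha hv.1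
      · have : a - v = c - u := by
          have := hcv.symm
          linear_combination (norm := abel) this
        rw [this]
        exact sub_mem hc hu.2
    have : a + u = (a - v) + (v + u) := by abel
    rw [this]
    exact Submodule.add_mem_sup hav (Submodule.add_mem_sup hv hu)
  · refine sup_le (le_inf ?_ ?_) (sup_le ?_ ?_)
    · exact le_sup_of_le_left inf_le_left
    · exact le_sup_of_le_left inf_le_right
    · exact le_inf (le_sup_of_le_left inf_le_left) le_sup_right
    · exact le_inf le_sup_right (le_sup_of_le_left inf_le_right)
end

section
/- Let V be a finite-dimensional complex vector space, k ≥ 2 an integer, and M₁, …, M_k invertible linear endomorphisms of V. For 1 ≤ l ≤ k set M̃_l := M_l ∘ M_{l−1} ∘ ⋯ ∘ M₁. Then Σ_{l=2}^{k} dim(ker(M_l − I) ∩ ker(M̃_{l−1} − I)) ≤ dim(⋂_{l=1}^{k} ker(M_l − I)) + Σ_{l=2}^{k−1} dim ker(M̃_l − I). (Equivalently, B(𝓜) ≤ A(𝓜), where A(𝓜) := dim(⋂_{l=1}^{k} ker(M_l − I)) and B(𝓜) := Σ_{l=2}^{k} dim(ker(M_l − I) ∩ ker(M̃_{l−1} −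 I)) − Σ_{l=2}^{k−1} dim ker(M̃_l − I).) -/
/-!
Write `K l = ⋂_{j ≤ l} ker (M j - 1)` and `T l = ker (M̃ l - 1)`, so that `K l ≤ T l`. The spaces
`A = ker (M (l+1) - 1) ⊓ T l` and `K l` satisfy `A ⊔ K l ≤ T l` and `A ⊓ K l ≤ K (l+1)`, hence by
Grassmann's formula `dim A + dim K l ≤ dim T l + dim K (l+1)`. Summing over `l = 1, …, k-1`
telescopes the `K`'s, and the leftover `dim K 1` cancels against `dim T 1`.
-/

open Module

/-- `iterProd M l = M l * M (l-1) * ⋯ * M 1` (the `M̃_l` of the paper, with the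
convention that the indexing of the maps is `1`-based and `iterProd M 0 = 1`). -/
def iterProd {V : Type*} [AddCommGroup V] [Module ℂ V]
    (M : ℕ → Module.End ℂ V) : ℕ → Module.End ℂ V
  | 0 => 1
  | l + 1 => M (l + 1) * iterProd M l

theorem Finset.sum_range_add_le_sum_range_add {α : Type*} [AddCommMonoid α] [PartialOrder α]
    [IsOrderedAddMonoid α] {a b c : ℕ → α} (h : ∀ i, a i + b i ≤ c i + b (i + 1)) (n : ℕ) :
    ∑ i ∈ range n, a i + b 0 ≤ ∑ i ∈ range n, c i + b n := by
  induction n with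
  | zero => simp
  | succ n ih =>
    calc ∑ i ∈ range (n + 1), a i + b 0 = a n + (∑ i ∈ range n, a i + b 0) := by
          rw [sum_range_succ, add_comm _ (a n), add_assoc]
      _ ≤ a n + (∑ i ∈ range n, c i + b n) := add_le_add_right ih _
      _ = ∑ i ∈ range n, c i + (a n + b n) := by abel
      _ ≤ ∑ i ∈ range n, c i + (c n + b (n + 1)) := add_le_add_right (h n) _
      _ = ∑ i ∈ range (n + 1), c i + b (n + 1) := by rw [sum_range_succ, add_assoc]

theorem Submodule.finrank_add_finrank_le_of_sup_le_of_inf_le {K V : Type*} [DivisionRing K]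
    [AddCommGroup V] [Module K V] [FiniteDimensional K V] {A B C D : Submodule K V}
    (hsup : A ⊔ B ≤ C) (hinf : A ⊓ B ≤ D) :
    finrank K A + finrank K B ≤ finrank K C + finrank K D := by
  rw [← finrank_sup_add_finrank_inf_eq]
  exact add_le_add (finrank_mono hsup) (finrank_mono hinf)

section iterProd

variable {V : Type*} [AddCommGroup V] [Module ℂ V] (M : ℕ → Module.End ℂ V)

theorem iInf_ker_sub_one_succ (n : ℕ) :
    ⨅ j ∈ Finset.Icc 1 (n + 1), LinearMap.ker (M j - 1) =
      LinearMap.ker (M (n + 1) - 1) ⊓ ⨅ j ∈ Finset.Icc 1 n, LinearMap.ker (M j - 1) := by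
  rw [← Finset.insert_Icc_right_eq_Icc_add_one (by omega), Finset.iInf_insert]

theorem iInf_ker_sub_one_le_ker_iterProd_sub_one (n : ℕ) :
    ⨅ j ∈ Finset.Icc 1 n, LinearMap.ker (M j - 1) ≤ LinearMap.ker (iterProd M n - 1) := by
  induction n with
  | zero => simp [iterProd]
  | succ n ih =>
    rw [iInf_ker_sub_one_succ]
    rintro x ⟨hx, hxn⟩
    have hxn := ih hxn
    simp only [SetLike.mem_coe, LinearMap.mem_ker, LinearMap.sub_apply, Module.End.one_apply,
      sub_eq_zero] at hx hxn ⊢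
    rw [iterProd, Module.End.mul_apply, hxn, hx]

theorem finrank_ker_inf_ker_iterProd_add_le [FiniteDimensional ℂ V] (n : ℕ) :
    finrank ℂ (LinearMap.ker (M (n + 1) - 1) ⊓ LinearMap.ker (iterProd M n - 1) : Submodule ℂ V) +
        finrank ℂ (⨅ j ∈ Finset.Icc 1 n, LinearMap.ker (M j - 1) : Submodule ℂ V) ≤
      finrank ℂ (LinearMap.ker (iterProd M n - 1)) +
        finrank ℂ (⨅ j ∈ Finset.Icc 1 (n + 1), LinearMap.ker (M j - 1) : Submodule ℂ V) := by
  refine Submodule.finrank_add_finrank_le_of_sup_le_of_inf_le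
    (sup_le inf_le_right (iInf_ker_sub_one_le_ker_iterProd_sub_one M n)) ?_
  rw [iInf_ker_sub_one_succ]
  exact inf_le_inf_right _ inf_le_left

end iterProd

theorem stmt16_general {V : Type*} [AddCommGroup V] [Module ℂ V] [FiniteDimensional ℂ V]
    (k : ℕ) (M : ℕ → Module.End ℂ V) :
    ∑ l ∈ Finset.Icc 2 k,
        finrank ℂ (LinearMap.ker (M l - 1) ⊓
          LinearMap.ker (iterProd M (l - 1) - 1) : Submodule ℂ V) ≤
      finrank ℂ (⨅ l ∈ Finset.Icc 1 k, LinearMap.ker (M l - 1) : Submodule ℂ V) +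
        ∑ l ∈ Finset.Icc 2 (k - 1),
          finrank ℂ (LinearMap.ker (iterProd M l - 1) : Submodule ℂ V) := by
  obtain _ | _ | n := k
  · simp
  · simp
  have telescope := Finset.sum_range_add_le_sum_range_add
    (fun i => finrank_ker_inf_ker_iterProd_add_le M (i + 1)) (n + 1)
  have hK1 : ⨅ j ∈ Finset.Icc 1 1, LinearMap.ker (M j - 1) = LinearMap.ker (iterProd M 1 - 1) := by
    simp [iterProd]
  have hA : ∑ l ∈ Finset.Icc 2 (n + 2),
      finrank ℂ (LinearMap.ker (M l - 1) ⊓ LinearMap.ker (iterProd M (l - 1) - 1) : Submodule ℂ V) =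
      ∑ i ∈ Finset.range (n + 1), finrank ℂ (LinearMap.ker (M (i + 1 + 1) - 1) ⊓
        LinearMap.ker (iterProd M (i + 1) - 1) : Submodule ℂ V) := by
    rw [← Finset.Ico_add_one_right_eq_Icc, Finset.sum_Ico_eq_sum_range]
    refine Finset.sum_congr (by simp) fun i _ => ?_
    rw [show 2 + i = i + 1 + 1 by omega, Nat.add_sub_cancel]
  have hT : ∑ i ∈ Finset.range (n + 1), finrank ℂ (LinearMap.ker (iterProd M (i + 1) - 1)) =
      finrank ℂ (LinearMap.ker (iterProd M 1 - 1)) +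
        ∑ l ∈ Finset.Icc 2 (n + 1), finrank ℂ (LinearMap.ker (iterProd M l - 1)) := by
    rw [Finset.sum_range_succ', add_comm, ← Finset.Ico_add_one_right_eq_Icc,
      Finset.sum_Ico_eq_sum_range]
    refine congrArg₂ _ rfl (Finset.sum_congr (by simp) fun i _ => ?_)
    rw [show 2 + i = i + 1 + 1 by omega]
  rw [hK1] at telescope
  rw [hA, Nat.add_sub_cancel]
  omega

theorem stmt16 {V : Type*} [AddCommGroup V] [Module ℂ V] [FiniteDimensional ℂ V]
    (k : ℕ) (hk : 2 ≤ k) (M : ℕ → Module.End ℂ V)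
    (hM : ∀ l ∈ Finset.Icc 1 k, Function.Bijective (M l)) :
    ∑ l ∈ Finset.Icc 2 k,
        finrank ℂ (LinearMap.ker (M l - 1) ⊓
          LinearMap.ker (iterProd M (l - 1) - 1) : Submodule ℂ V) ≤
      finrank ℂ (⨅ l ∈ Finset.Icc 1 k, LinearMap.ker (M l - 1) : Submodule ℂ V) +
        ∑ l ∈ Finset.Icc 2 (k - 1),
          finrank ℂ (LinearMap.ker (iterProd M l - 1) : Submodule ℂ V) :=
  stmt16_general k M
end
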